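/- arXiv:nlin/0007017 — 2 statements merged into one kernel-verified Lean document; each statement's English description precedes it below -/
import Mathlib

section
/- Let n ≥ 3 be odd and m := (n−1)/2. Let G be any real linear combination of the quartics a_j a_k and b_j b_k (1 ≤ j, k ≤ m). Then the 2m functions a_1, …, a_m, b_1, …, b_m pairwise Poisson-commute, and each of them Poisson-commutes with H₂ + G; in particular the truncated normal form H₂ + G of the odd periodic FPU chain has the quadratic integrals a_j, b_j (1 ≤ j ≤ m). -/
/-!
We work with polynomials on ℝ^{2n-2}, encoded as multivariate polynomials in the
variables `q_j, p_j` (`1 ≤ j ≤ n-1`).  The variable type is `ℕ ⊕ ℕ`, with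
`Sum.inl j` standing for `q_j` and `Sum.inr j` for `p_j`; a polynomial on
ℝ^{2n-2} is one supported on the variables with index `1 ≤ j ≤ n-1`.
-/

/-- Variable type: `Sum.inl j ↔ q_j`, `Sum.inr j ↔ p_j`. -/
abbrev Var : Type := ℕ ⊕ ℕ

/-- The variables of ℝ^{2n-2}: `q_j, p_j` for `1 ≤ j ≤ n-1`. -/
def fpuVars (n : ℕ) : Set Var :=
  {v | ∃ j, 1 ≤ j ∧ j ≤ n - 1 ∧ (v = Sum.inl j ∨ v = Sum.inr j)}

/-- The coordinate polynomial `q_j`. -/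
noncomputable def qP (j : ℕ) : MvPolynomial Var ℝ := MvPolynomial.X (Sum.inl j)

/-- The coordinate polynomial `p_j`. -/
noncomputable def pP (j : ℕ) : MvPolynomial Var ℝ := MvPolynomial.X (Sum.inr j)

/-- The eigenvalues `ω_j = 2 sin(jπ/n)` of the linear periodic FPU problem. -/
noncomputable def omg (n j : ℕ) : ℝ := 2 * Real.sin (j * Real.pi / n)

/-- The Poisson bracket
`{f, g} = Σ_{j=1}^{n-1} (∂f/∂q_j ∂g/∂p_j − ∂f/∂p_j ∂g/∂q_j)`. -/
noncomputable def pb (n : ℕ) (f g : MvPolynomial Var ℝ) : MvPolynomial Var ℝ :=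
  ∑ j ∈ Finset.Icc 1 (n - 1),
    (MvPolynomial.pderiv (Sum.inl j) f * MvPolynomial.pderiv (Sum.inr j) g
      - MvPolynomial.pderiv (Sum.inr j) f * MvPolynomial.pderiv (Sum.inl j) g)

/-- The quadratic part `H₂ = Σ_{j=1}^{n-1} (p_j² + ω_j² q_j²)/2`. -/
noncomputable def H2 (n : ℕ) : MvPolynomial Var ℝ :=
  ∑ j ∈ Finset.Icc 1 (n - 1),
    MvPolynomial.C (1 / 2 : ℝ) * (pP j ^ 2 + MvPolynomial.C (omg n j ^ 2) * qP j ^ 2)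

/-- `a_j = (p_j² + p_{n-j}² + ω_j² q_j² + ω_j² q_{n-j}²)/(2ω_j)`, for `1 ≤ j < n/2`. -/
noncomputable def aP (n j : ℕ) : MvPolynomial Var ℝ :=
  MvPolynomial.C (1 / (2 * omg n j)) *
    (pP j ^ 2 + pP (n - j) ^ 2
      + MvPolynomial.C (omg n j ^ 2) * qP j ^ 2
      + MvPolynomial.C (omg n j ^ 2) * qP (n - j) ^ 2)

/-- `b_j = p_j q_{n-j} − p_{n-j} q_j`, for `1 ≤ j < n/2`. -/
noncomputable def bP (n j : ℕ) : MvPolynomial Var ℝ :=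
  pP j * qP (n - j) - pP (n - j) * qP j

/-- `c_j = (p_{n-j}² − p_j² + ω_j² q_{n-j}² − ω_j² q_j²)/(2ω_j)`, for `1 ≤ j < n/2`. -/
noncomputable def cP (n j : ℕ) : MvPolynomial Var ℝ :=
  MvPolynomial.C (1 / (2 * omg n j)) *
    (pP (n - j) ^ 2 - pP j ^ 2
      + MvPolynomial.C (omg n j ^ 2) * qP (n - j) ^ 2
      - MvPolynomial.C (omg n j ^ 2) * qP j ^ 2)

/-- `d_j = (p_j p_{n-j} + ω_j² q_j q_{n-j})/ω_j`, for `1 ≤ j < n/2`. -/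
noncomputable def dP (n j : ℕ) : MvPolynomial Var ℝ :=
  MvPolynomial.C (1 / omg n j) *
    (pP j * pP (n - j) + MvPolynomial.C (omg n j ^ 2) * qP j * qP (n - j))

/-- For even `n`, `a_{n/2} = (p_{n/2}² + ω_{n/2}² q_{n/2}²)/(2ω_{n/2})`. -/
noncomputable def aHalf (n : ℕ) : MvPolynomial Var ℝ :=
  MvPolynomial.C (1 / (2 * omg n (n / 2))) *
    (pP (n / 2) ^ 2 + MvPolynomial.C (omg n (n / 2) ^ 2) * qP (n / 2) ^ 2)

/-- The linear substitution realizing the rotation symmetry `T`: for `1 ≤ j < n/2`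
it rotates the planes `(q_j, q_{n-j})` and `(p_j, p_{n-j})` by the angle `2πj/n`,
and for even `n` it flips the signs of `q_{n/2}` and `p_{n/2}`.
`Tsub v` is the polynomial expressing the `v`-th coordinate of `T x`. -/
noncomputable def Tsub (n : ℕ) : Var → MvPolynomial Var ℝ := fun v =>
  match v with
  | Sum.inl m =>
      if 1 ≤ m ∧ 2 * m < n then
        MvPolynomial.C (Real.cos (2 * Real.pi * m / n)) * qP m
          + MvPolynomial.C (Real.sin (2 * Real.pi * m / n)) * qP (n - m)
      else if 2 * m = n then - qP m
      else if n < 2 * m ∧ m ≤ n - 1 then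
        MvPolynomial.C (-(Real.sin (2 * Real.pi * (n - m) / n))) * qP (n - m)
          + MvPolynomial.C (Real.cos (2 * Real.pi * (n - m) / n)) * qP m
      else qP m
  | Sum.inr m =>
      if 1 ≤ m ∧ 2 * m < n then
        MvPolynomial.C (Real.cos (2 * Real.pi * m / n)) * pP m
          + MvPolynomial.C (Real.sin (2 * Real.pi * m / n)) * pP (n - m)
      else if 2 * m = n then - pP m
      else if n < 2 * m ∧ m ≤ n - 1 then
        MvPolynomial.C (-(Real.sin (2 * Real.pi * (n - m) / n))) * pP (n - m)
          + MvPolynomial.C (Real.cos (2 * Real.pi * (n - m) / n)) * pP m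
      else pP m

/-- The linear substitution realizing the reflection symmetry `S`:
`q_j ↦ −q_j`, `p_j ↦ −p_j` for `1 ≤ j ≤ n/2`, the other coordinates are fixed.
`Ssub v` is the polynomial expressing the `v`-th coordinate of `S x`. -/
noncomputable def Ssub (n : ℕ) : Var → MvPolynomial Var ℝ := fun v =>
  match v with
  | Sum.inl m => if 1 ≤ m ∧ 2 * m ≤ n then - qP m else qP m
  | Sum.inr m => if 1 ≤ m ∧ 2 * m ≤ n then - pP m else pP m

/-!
STATEMENT 6: For odd `n ≥ 3` and `m = (n−1)/2`, for any real linear combination `G`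
of the quartics `a_j a_k` and `b_j b_k` (`1 ≤ j, k ≤ m`), the `2m` functions
`a_1, …, a_m, b_1, …, b_m` pairwise Poisson-commute and each Poisson-commutes with
`H₂ + G`: they are quadratic integrals of the truncated normal form `H₂ + G`.
-/

open MvPolynomial Finset

/-- The `l`-th summand of the Poisson bracket. -/
noncomputable def sb (l : ℕ) (f g : MvPolynomial Var ℝ) : MvPolynomial Var ℝ :=
  pderiv (Sum.inl l) f * pderiv (Sum.inr l) g - pderiv (Sum.inr l) f * pderiv (Sum.inl l) g

lemma pb_eq_sum (n : ℕ) (f g : MvPolynomial Var ℝ) :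
    pb n f g = ∑ l ∈ Finset.Icc 1 (n - 1), sb l f g := rfl

lemma omg_sub (n j : ℕ) (hj : j ≤ n) (hn : 0 < n) : omg n (n - j) = omg n j := by
  unfold omg
  have hn' : (n : ℝ) ≠ 0 := Nat.cast_ne_zero.mpr hn.ne'
  congr 1
  rw [Nat.cast_sub hj]
  rw [show ((n : ℝ) - j) * Real.pi / n = Real.pi - j * Real.pi / n by field_simp,
    Real.sin_pi_sub]

lemma pb_self (n : ℕ) (f : MvPolynomial Var ℝ) : pb n f f = 0 := by
  rw [pb_eq_sum]
  exact Finset.sum_eq_zero fun l _ => by unfold sb; ring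

lemma pb_antisymm (n : ℕ) (f g : MvPolynomial Var ℝ) : pb n f g = - pb n g f := by
  rw [pb_eq_sum, pb_eq_sum, ← Finset.sum_neg_distrib]
  exact Finset.sum_congr rfl fun l _ => by unfold sb; ring

lemma pb_zero_of_disjoint (n : ℕ) (f g : MvPolynomial Var ℝ) (J K : ℕ → Prop)
    (hf : ∀ l, ¬ J l → pderiv (Sum.inl l) f = 0 ∧ pderiv (Sum.inr l) f = 0)
    (hg : ∀ l, ¬ K l → pderiv (Sum.inl l) g = 0 ∧ pderiv (Sum.inr l) g = 0)
    (hd : ∀ l, ¬ J l ∨ ¬ K l) : pb n f g = 0 := by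
  rw [pb_eq_sum]
  refine Finset.sum_eq_zero fun l _ => ?_
  unfold sb
  rcases hd l with h | h
  · rw [(hf l h).1, (hf l h).2]; ring
  · rw [(hg l h).1, (hg l h).2]; ring

lemma pb_eq_pair (n : ℕ) (f g : MvPolynomial Var ℝ) (j : ℕ) (h1 : 1 ≤ j) (h2 : 2 * j < n)
    (h0 : ∀ l, 1 ≤ l → l ≤ n - 1 → l ≠ j → l ≠ n - j → sb l f g = 0) :
    pb n f g = sb j f g + sb (n - j) f g := by
  have hsub : ({j, n - j} : Finset ℕ) ⊆ Finset.Icc 1 (n - 1) := by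
    intro x hx
    simp only [Finset.mem_insert, Finset.mem_singleton] at hx
    simp only [Finset.mem_Icc]
    omega
  have hne : j ≠ n - j := by omega
  rw [pb_eq_sum, ← Finset.sum_subset hsub (fun x hx hnx => by
      simp only [Finset.mem_Icc] at hx
      simp only [Finset.mem_insert, Finset.mem_singleton, not_or] at hnx
      exact h0 x hx.1 hx.2 hnx.1 hnx.2),
    Finset.sum_pair hne]

-- derivative vanishing lemmas
lemma aP_pd_ne (n j l : ℕ) (h1 : ¬ (l = j ∨ l = n - j)) :
    pderiv (Sum.inl l) (aP n j) = 0 ∧ pderiv (Sum.inr l) (aP n j) = 0 := by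
  push_neg at h1
  obtain ⟨ha, hb⟩ := h1
  constructor <;>
    simp [aP, qP, pP, pderiv_C_mul, pderiv_pow, map_add,
      pderiv_X_of_ne, Ne.symm ha, Ne.symm hb, ha, hb]

lemma bP_pd_ne (n j l : ℕ) (h1 : ¬ (l = j ∨ l = n - j)) :
    pderiv (Sum.inl l) (bP n j) = 0 ∧ pderiv (Sum.inr l) (bP n j) = 0 := by
  push_neg at h1
  obtain ⟨ha, hb⟩ := h1
  constructor <;>
    simp [bP, qP, pP, pderiv_mul, map_sub, pderiv_X_of_ne, Ne.symm ha, Ne.symm hb, ha, hb]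

lemma pb_aP_bP_self (n j : ℕ) (h1 : 1 ≤ j) (h2 : 2 * j < n) : pb n (aP n j) (bP n j) = 0 := by
  have hne : j ≠ n - j := by omega
  rw [pb_eq_pair n _ _ j h1 h2 (fun l hl1 hl2 hlj hlnj => by
    unfold sb
    rw [(aP_pd_ne n j l (by omega)).1, (aP_pd_ne n j l (by omega)).2]
    ring)]
  unfold sb
  simp [aP, bP, qP, pP, pderiv_C_mul, pderiv_mul, pderiv_pow, map_add, map_sub,
    hne, hne.symm]
  ring

lemma pderiv_H2_inl (n j : ℕ) (h1 : 1 ≤ j) (h2 : j ≤ n - 1) :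
    pderiv (Sum.inl j) (H2 n) = C (1/2 : ℝ) * (C (omg n j ^ 2) * (2 * qP j)) := by
  unfold H2
  rw [map_sum, Finset.sum_eq_single_of_mem j (by simp only [Finset.mem_Icc]; omega)]
  · simp [pderiv_C_mul, pderiv_pow, qP, pP]
    try ring
  · intro l _ hlj
    simp [pderiv_C_mul, pderiv_pow, qP, pP, pderiv_X_of_ne, hlj]

lemma pderiv_H2_inr (n j : ℕ) (h1 : 1 ≤ j) (h2 : j ≤ n - 1) :
    pderiv (Sum.inr j) (H2 n) = C (1/2 : ℝ) * (2 * pP j) := by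
  unfold H2
  rw [map_sum, Finset.sum_eq_single_of_mem j (by simp only [Finset.mem_Icc]; omega)]
  · simp [pderiv_C_mul, pderiv_pow, qP, pP]
    try ring
  · intro l _ hlj
    simp [pderiv_C_mul, pderiv_pow, qP, pP, pderiv_X_of_ne, hlj]

lemma pb_aP_H2 (n j : ℕ) (h1 : 1 ≤ j) (h2 : 2 * j < n) : pb n (aP n j) (H2 n) = 0 := by
  have hne : j ≠ n - j := by omega
  have hw : omg n (n - j) ^ 2 = omg n j ^ 2 := by rw [omg_sub n j (by omega) (by omega)]
  rw [pb_eq_pair n _ _ j h1 h2 (fun l hl1 hl2 hlj hlnj => by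
    unfold sb
    rw [(aP_pd_ne n j l (by omega)).1, (aP_pd_ne n j l (by omega)).2]
    ring)]
  unfold sb
  rw [pderiv_H2_inl n j h1 (by omega), pderiv_H2_inr n j h1 (by omega),
    pderiv_H2_inl n (n-j) (by omega) (by omega), pderiv_H2_inr n (n-j) (by omega) (by omega), hw]
  simp [aP, qP, pP, pderiv_C_mul, pderiv_pow, map_add, hne, hne.symm]
  ring

lemma pb_bP_H2 (n j : ℕ) (h1 : 1 ≤ j) (h2 : 2 * j < n) : pb n (bP n j) (H2 n) = 0 := by
  have hne : j ≠ n - j := by omega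
  have hw : omg n (n - j) ^ 2 = omg n j ^ 2 := by rw [omg_sub n j (by omega) (by omega)]
  rw [pb_eq_pair n _ _ j h1 h2 (fun l hl1 hl2 hlj hlnj => by
    unfold sb
    rw [(bP_pd_ne n j l (by omega)).1, (bP_pd_ne n j l (by omega)).2]
    ring)]
  unfold sb
  rw [pderiv_H2_inl n j h1 (by omega), pderiv_H2_inr n j h1 (by omega),
    pderiv_H2_inl n (n-j) (by omega) (by omega), pderiv_H2_inr n (n-j) (by omega) (by omega), hw]
  simp [bP, qP, pP, pderiv_mul, map_sub, hne, hne.symm]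
  ring

lemma pb_mul_right (n : ℕ) (f g h : MvPolynomial Var ℝ) :
    pb n f (g * h) = pb n f g * h + g * pb n f h := by
  rw [pb_eq_sum, pb_eq_sum, pb_eq_sum, Finset.sum_mul, Finset.mul_sum,
    ← Finset.sum_add_distrib]
  refine Finset.sum_congr rfl fun l _ => ?_
  unfold sb
  rw [pderiv_mul, pderiv_mul]
  ring

/-- `pb n f ·` as a linear map. -/
noncomputable def pbL (n : ℕ) (f : MvPolynomial Var ℝ) :
    MvPolynomial Var ℝ →ₗ[ℝ] MvPolynomial Var ℝ where
  toFun g := pb n f g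
  map_add' g h := by
    show pb n f (g + h) = pb n f g + pb n f h
    rw [pb_eq_sum, pb_eq_sum, pb_eq_sum, ← Finset.sum_add_distrib]
    refine Finset.sum_congr rfl fun l _ => ?_
    unfold sb
    rw [map_add, map_add]
    ring
  map_smul' c g := by
    show pb n f (c • g) = c • pb n f g
    rw [pb_eq_sum, pb_eq_sum, Finset.smul_sum]
    refine Finset.sum_congr rfl fun l _ => ?_
    unfold sb
    rw [(pderiv (Sum.inl l)).map_smul, (pderiv (Sum.inr l)).map_smul,
      smul_sub, mul_smul_comm, mul_smul_comm]

lemma pb_span_zero (n : ℕ) (f : MvPolynomial Var ℝ) (S : Set (MvPolynomial Var ℝ))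
    (hS : ∀ g ∈ S, pb n f g = 0) (G : MvPolynomial Var ℝ)
    (hG : G ∈ Submodule.span ℝ S) : pb n f G = 0 := by
  have : Submodule.span ℝ S ≤ LinearMap.ker (pbL n f) := by
    rw [Submodule.span_le]
    intro g hg
    exact LinearMap.mem_ker.mpr (hS g hg)
  exact this hG


lemma pb_aP_aP (n j k : ℕ) (hj1 : 1 ≤ j) (hj2 : 2 * j < n) (hk1 : 1 ≤ k) (hk2 : 2 * k < n) :
    pb n (aP n j) (aP n k) = 0 := by
  rcases eq_or_ne j k with rfl | hjk
  · exact pb_self n _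
  · exact pb_zero_of_disjoint n _ _ (fun l => l = j ∨ l = n - j) (fun l => l = k ∨ l = n - k)
      (fun l h => aP_pd_ne n j l h) (fun l h => aP_pd_ne n k l h) (fun l => by omega)

lemma pb_bP_bP (n j k : ℕ) (hj1 : 1 ≤ j) (hj2 : 2 * j < n) (hk1 : 1 ≤ k) (hk2 : 2 * k < n) :
    pb n (bP n j) (bP n k) = 0 := by
  rcases eq_or_ne j k with rfl | hjk
  · exact pb_self n _
  · exact pb_zero_of_disjoint n _ _ (fun l => l = j ∨ l = n - j) (fun l => l = k ∨ l = n - k)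
      (fun l h => bP_pd_ne n j l h) (fun l h => bP_pd_ne n k l h) (fun l => by omega)

lemma pb_aP_bP (n j k : ℕ) (hj1 : 1 ≤ j) (hj2 : 2 * j < n) (hk1 : 1 ≤ k) (hk2 : 2 * k < n) :
    pb n (aP n j) (bP n k) = 0 := by
  rcases eq_or_ne j k with rfl | hjk
  · exact pb_aP_bP_self n j hj1 hj2
  · exact pb_zero_of_disjoint n _ _ (fun l => l = j ∨ l = n - j) (fun l => l = k ∨ l = n - k)
      (fun l h => aP_pd_ne n j l h) (fun l h => bP_pd_ne n k l h) (fun l => by omega)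

lemma pb_bP_aP (n j k : ℕ) (hj1 : 1 ≤ j) (hj2 : 2 * j < n) (hk1 : 1 ≤ k) (hk2 : 2 * k < n) :
    pb n (bP n j) (aP n k) = 0 := by
  rw [pb_antisymm, pb_aP_bP n k j hk1 hk2 hj1 hj2, neg_zero]

lemma pb_add_right (n : ℕ) (f g h : MvPolynomial Var ℝ) :
    pb n f (g + h) = pb n f g + pb n f h := (pbL n f).map_add g h


theorem odd_chain_truncated_normal_form_integrals (n : ℕ) (hn : 3 ≤ n) (hodd : Odd n)
    (G : MvPolynomial Var ℝ)
    (hG : G ∈ Submodule.span ℝ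
      ({g | ∃ j k, 1 ≤ j ∧ j ≤ (n - 1) / 2 ∧ 1 ≤ k ∧ k ≤ (n - 1) / 2 ∧
          g = aP n j * aP n k}
        ∪ {g | ∃ j k, 1 ≤ j ∧ j ≤ (n - 1) / 2 ∧ 1 ≤ k ∧ k ≤ (n - 1) / 2 ∧
          g = bP n j * bP n k})) :
    (∀ j k, 1 ≤ j → j ≤ (n - 1) / 2 → 1 ≤ k → k ≤ (n - 1) / 2 →
        pb n (aP n j) (aP n k) = 0 ∧ pb n (aP n j) (bP n k) = 0 ∧
        pb n (bP n j) (aP n k) = 0 ∧ pb n (bP n j) (bP n k) = 0) ∧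
    (∀ j, 1 ≤ j → j ≤ (n - 1) / 2 →
        pb n (aP n j) (H2 n + G) = 0 ∧ pb n (bP n j) (H2 n + G) = 0) := by
  obtain ⟨t, ht⟩ := hodd
  have hb : ∀ j, 1 ≤ j → j ≤ (n - 1) / 2 → 2 * j < n := fun j h1 h2 => by omega
  have hGzero : ∀ f : MvPolynomial Var ℝ,
      (∀ k, 1 ≤ k → 2 * k < n → pb n f (aP n k) = 0 ∧ pb n f (bP n k) = 0) →
      pb n f G = 0 := by
    intro f hf
    refine pb_span_zero n f _ ?_ G hG
    rintro g (⟨j, k, hj1, hj2, hk1, hk2, rfl⟩ | ⟨j, k, hj1, hj2, hk1, hk2, rfl⟩) <;>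
      rw [pb_mul_right]
    · rw [(hf j hj1 (hb j hj1 hj2)).1, (hf k hk1 (hb k hk1 hk2)).1, zero_mul, mul_zero, add_zero]
    · rw [(hf j hj1 (hb j hj1 hj2)).2, (hf k hk1 (hb k hk1 hk2)).2, zero_mul, mul_zero, add_zero]
  constructor
  · intro j k hj1 hj2 hk1 hk2
    have h2j := hb j hj1 hj2
    have h2k := hb k hk1 hk2
    exact ⟨pb_aP_aP n j k hj1 h2j hk1 h2k, pb_aP_bP n j k hj1 h2j hk1 h2k,
      pb_bP_aP n j k hj1 h2j hk1 h2k, pb_bP_bP n j k hj1 h2j hk1 h2k⟩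
  · intro j hj1 hj2
    have h2j := hb j hj1 hj2
    constructor
    · rw [pb_add_right, pb_aP_H2 n j hj1 h2j,
        hGzero (aP n j) (fun k hk1 hk2 =>
          ⟨pb_aP_aP n j k hj1 h2j hk1 hk2, pb_aP_bP n j k hj1 h2j hk1 hk2⟩), add_zero]
    · rw [pb_add_right, pb_bP_H2 n j hj1 h2j,
        hGzero (bP n j) (fun k hk1 hk2 =>
          ⟨pb_bP_aP n j k hj1 h2j hk1 hk2, pb_bP_bP n j k hj1 h2j hk1 hk2⟩), add_zero]
end

section
/- Let n ≥ 3 be odd and m := (n−1)/2, and let F : ℝ^{2n-2} → ℝ^{n-1} be the map F = (a_1, …, a_m, b_1, …, b_m). Then the image of F equals { (a, b) ∈ ℝ^m × ℝ^m : a_j ≥ 0 and |b_j| ≤ a_j for all 1 ≤ j ≤ m }. -/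
/-!
We work on ℝ^{2n-2}, realized as `(Fin (n-1) → ℝ) × (Fin (n-1) → ℝ)`:
the first factor carries the coordinates `q_1, …, q_{n-1}` and the second the
coordinates `p_1, …, p_{n-1}` (index `i : Fin (n-1)` corresponds to `j = i + 1`).
-/

/-- Coordinate extension: `coord n x j` is the `j`-th coordinate (`1 ≤ j ≤ n-1`)
of `x : Fin (n-1) → ℝ`. -/
def coord (n : ℕ) (x : Fin (n - 1) → ℝ) (j : ℕ) : ℝ :=
  if h : 1 ≤ j ∧ j ≤ n - 1 then x ⟨j - 1, by omega⟩ else 0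

/-- `a_j = (p_j² + p_{n-j}² + ω_j² q_j² + ω_j² q_{n-j}²)/(2ω_j)`, for `1 ≤ j < n/2`. -/
noncomputable def aF (n j : ℕ) (x : (Fin (n - 1) → ℝ) × (Fin (n - 1) → ℝ)) : ℝ :=
  (coord n x.2 j ^ 2 + coord n x.2 (n - j) ^ 2
    + omg n j ^ 2 * coord n x.1 j ^ 2 + omg n j ^ 2 * coord n x.1 (n - j) ^ 2)
    / (2 * omg n j)

/-- `b_j = p_j q_{n-j} − p_{n-j} q_j`, for `1 ≤ j < n/2`. -/
noncomputable def bF (n j : ℕ) (x : (Fin (n - 1) → ℝ) × (Fin (n - 1) → ℝ)) : ℝ :=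
  coord n x.2 j * coord n x.1 (n - j) - coord n x.2 (n - j) * coord n x.1 j

/-- For odd `n` with `m = (n-1)/2`, the integral map
`F = (a_1, …, a_m, b_1, …, b_m) : ℝ^{2n-2} → ℝ^{n-1}`. -/
noncomputable def Fmap (n : ℕ) (x : (Fin (n - 1) → ℝ) × (Fin (n - 1) → ℝ)) :
    (Fin ((n - 1) / 2) → ℝ) × (Fin ((n - 1) / 2) → ℝ) :=
  (fun i => aF n (i.1 + 1) x, fun i => bF n (i.1 + 1) x)

/-!
STATEMENT 7: For odd `n ≥ 3` and `m = (n−1)/2`, the image of the integral map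
`F = (a_1, …, a_m, b_1, …, b_m) : ℝ^{2n-2} → ℝ^{n-1}` equals
`{(a, b) : a_j ≥ 0 and |b_j| ≤ a_j for all 1 ≤ j ≤ m}`.
-/

lemma omg_pos (n j : ℕ) (h1 : 1 ≤ j) (h2 : j < n) : 0 < omg n j := by
  have hn0 : 0 < n := by omega
  have hn : (0:ℝ) < n := by exact_mod_cast hn0
  have hj : (0:ℝ) < j := by exact_mod_cast h1
  have hjn : (j:ℝ) < n := by exact_mod_cast h2
  have := Real.pi_pos
  apply mul_pos two_pos
  apply Real.sin_pos_of_pos_of_lt_pi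
  · positivity
  · rw [div_lt_iff₀ hn]
    nlinarith

lemma key (ω a b : ℝ) (hω : 0 < ω) (ha : 0 ≤ a) (hb : |b| ≤ a) :
    ∃ u v : ℝ, u^2 + v^2 = 2*ω*a ∧ u*v = ω*b := by
  obtain ⟨hb1, hb2⟩ := abs_le.mp hb
  set s := Real.sqrt (2*ω*(a+b)) with hsdef
  set t := Real.sqrt (2*ω*(a-b)) with htdef
  have hs : s^2 = 2*ω*(a+b) := Real.sq_sqrt (by nlinarith)
  have ht : t^2 = 2*ω*(a-b) := Real.sq_sqrt (by nlinarith)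
  exact ⟨(s+t)/2, (s-t)/2, by linear_combination (hs + ht)/2, by linear_combination (hs - ht)/4⟩

theorem image_of_integral_map (n : ℕ) (hn : 3 ≤ n) (hodd : Odd n) :
    Set.range (Fmap n) =
      {ab : (Fin ((n - 1) / 2) → ℝ) × (Fin ((n - 1) / 2) → ℝ) |
        ∀ i, 0 ≤ ab.1 i ∧ |ab.2 i| ≤ ab.1 i} := by
  obtain ⟨m, hm⟩ := hodd
  have hm3 : n = 2*m + 1 := by omega
  have hmn : (n - 1) / 2 = m := by omega
  ext ab
  constructor
  · rintro ⟨x, rfl⟩ i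
    have hi : i.1 < (n-1)/2 := i.2
    set j := i.1 + 1 with hj
    have hj1 : 1 ≤ j := le_refl 1 |>.trans (by omega)
    have hjm : j ≤ m := by omega
    have hjn : j < n := by omega
    have hω : 0 < omg n j := omg_pos n j hj1 hjn
    set P1 := coord n x.2 j
    set P2 := coord n x.2 (n - j)
    set Q1 := coord n x.1 j
    set Q2 := coord n x.1 (n - j)
    have haF : aF n j x = (P1^2 + P2^2 + omg n j^2 * Q1^2 + omg n j^2 * Q2^2) / (2 * omg n j) := rfl
    have hbF : bF n j x = P1 * Q2 - P2 * Q1 := rfl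
    constructor
    · show 0 ≤ aF n j x
      rw [haF]
      positivity
    · show |bF n j x| ≤ aF n j x
      rw [haF, hbF, abs_le]
      constructor
      · rw [neg_le, le_div_iff₀ (by positivity)]
        nlinarith [sq_nonneg (P1 + omg n j * Q2), sq_nonneg (P2 - omg n j * Q1)]
      · rw [le_div_iff₀ (by positivity)]
        nlinarith [sq_nonneg (P1 - omg n j * Q2), sq_nonneg (P2 + omg n j * Q1)]
  · intro hab
    -- construct preimage
    have hω : ∀ i : Fin ((n-1)/2), 0 < omg n (i.1 + 1) := fun i =>
      omg_pos n (i.1+1) (by omega) (by have := i.2; omega)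
    choose u v huv1 huv2 using fun i : Fin ((n-1)/2) =>
      key (omg n (i.1+1)) (ab.1 i) (ab.2 i) (hω i) (hab i).1 (hab i).2
    set x : (Fin (n - 1) → ℝ) × (Fin (n - 1) → ℝ) :=
      (fun k => if h : k.1 + 1 ≤ m then 0
        else v ⟨n - (k.1 + 2), by omega⟩ / omg n (n - (k.1 + 2) + 1),
       fun k => if h : k.1 + 1 ≤ m then u ⟨k.1, by omega⟩ else 0) with hx
    refine ⟨x, ?_⟩
    have hcoord : ∀ (y : Fin (n-1) → ℝ) (j : ℕ) (h1 : 1 ≤ j) (h2 : j ≤ n - 1),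
        coord n y j = y ⟨j - 1, by omega⟩ := by
      intro y j h1 h2
      simp [coord, h1, h2]
    have compA : ∀ i : Fin ((n-1)/2), coord n x.2 (i.1+1) = u i := by
      intro i
      have hi := i.2
      rw [hcoord _ _ (by omega) (by omega)]
      have : i.1 + 1 - 1 + 1 ≤ m := by omega
      simp only [hx]
      rw [dif_pos this]
      exact congrArg u (Fin.ext (by simp))
    have compB : ∀ i : Fin ((n-1)/2), coord n x.2 (n - (i.1+1)) = 0 := by
      intro i
      have hi := i.2
      rw [hcoord _ _ (by omega) (by omega)]
      simp only [hx]
      rw [dif_neg (by omega)]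
    have compC : ∀ i : Fin ((n-1)/2), coord n x.1 (i.1+1) = 0 := by
      intro i
      have hi := i.2
      rw [hcoord _ _ (by omega) (by omega)]
      simp only [hx]
      rw [dif_pos (by omega)]
    have compD : ∀ i : Fin ((n-1)/2),
        coord n x.1 (n - (i.1+1)) = v i / omg n (i.1+1) := by
      intro i
      have hi := i.2
      rw [hcoord _ _ (by omega) (by omega)]
      simp only [hx]
      rw [dif_neg (by omega)]
      have h1 : n - (n - (i.1+1) - 1 + 2) = i.1 := by omega
      congr 2 <;> first
        | exact Fin.ext (by simp; omega)
        | omega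
    have hmain : ∀ i : Fin ((n-1)/2), aF n (i.1+1) x = ab.1 i ∧ bF n (i.1+1) x = ab.2 i := by
      intro i
      have hωi := hω i
      have h1 := huv1 i
      have h2 := huv2 i
      unfold aF bF
      rw [compA, compB, compC, compD]
      constructor
      · field_simp
        ring_nf
        ring_nf at h1
        nlinarith [h1]
      · field_simp
        linarith [h2]
    refine Prod.ext ?_ ?_ <;> funext i
    · exact (hmain i).1
    · exact (hmain i).2
end
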